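/- arXiv:math/0001028 — 3 statements merged into one kernel-verified Lean document; each statement's English description precedes it below -/
import Mathlib

section
/- Let J = [z_min, z_max] with (z_max - z_min)/ε = n ∈ ℕ, ρ(z_min) = ρ(z_max), and ρ(z) ≤ ρ(z_max) for all z ∈ J. Define operators on ℂⁿ with orthonormal basis e_0,…,e_{n-1} by X₀ e_m = (z_min + εm) e_m, X₊ e_m = (ρ(z_min) - ρ(z_min + εm + ε))^{1/2} e_{m+1} (with e_n := 0), and X₋ e_m = (ρ(z_min) - ρ(z_min + εm))^{1/2} e_{m-1} (with e_{-1} := 0). Then these operators satisfy X₀X₊ - X₊X₀ = εX₊, X₀X₋ - X₋X₀ = -εX₋, and X₊X₋ = ρ(z_min)·I - ρ(X₀) (where ρ(X₀) acts diagonally), and moreover X₊ is the adjoint of X₋. -/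
theorem stmt_5 (n : ℕ) (ε zmin : ℝ) (ρ : ℝ → ℝ)
    (hε : 0 < ε) (hρcont : Continuous ρ)
    (hends : ρ zmin = ρ (zmin + ε * n))
    (hmax : ∀ z ∈ Set.Icc zmin (zmin + ε * n), ρ z ≤ ρ (zmin + ε * n))
    (X₀ Xp Xm : Matrix (Fin n) (Fin n) ℂ)
    (hX₀ : X₀ = Matrix.diagonal (fun m : Fin n => ((zmin + ε * (m : ℕ) : ℝ) : ℂ)))
    (hXp : ∀ i j : Fin n, Xp i j =
      if (i : ℕ) = (j : ℕ) + 1 then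
        ((Real.sqrt (ρ zmin - ρ (zmin + ε * (j : ℕ) + ε)) : ℝ) : ℂ) else 0)
    (hXm : ∀ i j : Fin n, Xm i j =
      if (i : ℕ) + 1 = (j : ℕ) then
        ((Real.sqrt (ρ zmin - ρ (zmin + ε * (j : ℕ))) : ℝ) : ℂ) else 0) :
    X₀ * Xp - Xp * X₀ = (ε : ℂ) • Xp ∧
    X₀ * Xm - Xm * X₀ = -((ε : ℂ) • Xm) ∧
    Xp * Xm = ((ρ zmin : ℝ) : ℂ) • (1 : Matrix (Fin n) (Fin n) ℂ) -
      Matrix.diagonal (fun m : Fin n => ((ρ (zmin + ε * (m : ℕ)) : ℝ) : ℂ)) ∧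
    Xp.conjTranspose = Xm := by
  have key : ∀ m : ℕ, m ≤ n → 0 ≤ ρ zmin - ρ (zmin + ε * m) := by
    intro m hm
    have h1 : ρ (zmin + ε * m) ≤ ρ (zmin + ε * n) := by
      apply hmax
      constructor
      · nlinarith [Nat.cast_nonneg (α := ℝ) m]
      · have : (m : ℝ) ≤ n := Nat.cast_le.mpr hm
        nlinarith
    rw [hends]; linarith
  subst hX₀
  refine ⟨?_, ?_, ?_, ?_⟩
  · ext i j
    simp only [Matrix.sub_apply, Matrix.diagonal_mul, Matrix.mul_diagonal,
      Matrix.smul_apply, smul_eq_mul]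
    rw [hXp i j]
    by_cases h : (i : ℕ) = (j : ℕ) + 1
    · simp only [h, if_pos rfl, if_true]
      push_cast [h]
      ring
    · simp [h]
  · ext i j
    simp only [Matrix.sub_apply, Matrix.diagonal_mul, Matrix.mul_diagonal,
      Matrix.neg_apply, Matrix.smul_apply, smul_eq_mul]
    rw [hXm i j]
    by_cases h : (i : ℕ) + 1 = (j : ℕ)
    · simp only [if_pos h]
      push_cast [← h]
      ring
    · simp [h]
  · ext i j
    rw [Matrix.mul_apply]
    simp only [hXp, hXm, Matrix.sub_apply, Matrix.smul_apply, Matrix.one_apply,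
      Matrix.diagonal_apply, smul_eq_mul]
    by_cases hij : i = j
    · subst hij
      rcases Nat.eq_zero_or_eq_succ_pred (i : ℕ) with h0 | hs
      · rw [Finset.sum_eq_zero]
        · simp [h0]
        · intro k _
          rw [if_neg (by omega)]
          simp
      · set m := (i : ℕ) - 1 with hm
        have hmn : m < n := by omega
        rw [Finset.sum_eq_single (⟨m, hmn⟩ : Fin n)]
        · rw [if_pos (by simp; omega), if_pos (by simp; omega)]
          have harg : zmin + ε * (m : ℕ) + ε = zmin + ε * (i : ℕ) := by
            push_cast; have : (i:ℕ) = m + 1 := by omega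
            rw [this]; push_cast; ring
          rw [harg, ← Complex.ofReal_mul,
            Real.mul_self_sqrt (key (i : ℕ) (le_of_lt i.isLt))]
          simp
        · intro k _ hk
          rw [if_neg (by
            intro hcon
            apply hk
            apply Fin.ext
            simp; omega)]
          simp
        · intro h; exact absurd (Finset.mem_univ _) h
    · rw [Finset.sum_eq_zero]
      · have : ¬ ((i:ℕ) = (j:ℕ)) := fun h => hij (Fin.ext h)
        simp [hij, Matrix.one_apply_ne hij]
      · intro k _
        by_cases h1 : (i : ℕ) = (k : ℕ) + 1
        · rw [if_neg (show ¬ ((k : ℕ) + 1 = (j : ℕ)) from fun h2 =>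
            hij (Fin.ext (by omega)))]
          simp
        · rw [if_neg h1]; simp
  · ext i j
    rw [Matrix.conjTranspose_apply, hXp j i, hXm i j]
    by_cases h : (i : ℕ) + 1 = (j : ℕ)
    · rw [if_pos h.symm, if_pos h]
      have : zmin + ε * (i : ℕ) + ε = zmin + ε * (j : ℕ) := by
        rw [← h]; push_cast; ring
      rw [this, Complex.star_def, Complex.conj_ofReal]
    · rw [if_neg (fun hc => h hc.symm), if_neg h, star_zero]
end

section
/- With the standard representation of the previous context (X₀ diagonal with eigenvalues z_min + εm, X₊ and X₋ the weighted shifts with weights (ρ(z_min) - ρ(z_min + εm + ε))^{1/2} and (ρ(z_min) - ρ(z_min + εm))^{1/2}), the commutator identity [X₊, X₋] = ρ(X₀ + ε) - ρ(X₀) holds, where ρ(X₀+ε) and ρ(X₀) act diagonally by e_m ↦ ρ(z_min + εm + ε) e_m and e_m ↦ ρ(z_min + εm) e_m respectively. -/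
theorem stmt_6 (n : ℕ) (ε zmin : ℝ) (ρ : ℝ → ℝ)
    (hε : 0 < ε)
    (hends : ρ zmin = ρ (zmin + ε * n))
    (hmax : ∀ z ∈ Set.Icc zmin (zmin + ε * n), ρ z ≤ ρ zmin)
    (Xp Xm : Matrix (Fin n) (Fin n) ℂ)
    (hXp : ∀ i j : Fin n, Xp i j =
      if (i : ℕ) = (j : ℕ) + 1 then
        ((Real.sqrt (ρ zmin - ρ (zmin + ε * (j : ℕ) + ε)) : ℝ) : ℂ) else 0)
    (hXm : ∀ i j : Fin n, Xm i j =
      if (i : ℕ) + 1 = (j : ℕ) then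
        ((Real.sqrt (ρ zmin - ρ (zmin + ε * (j : ℕ))) : ℝ) : ℂ) else 0) :
    Xp * Xm - Xm * Xp =
      Matrix.diagonal (fun m : Fin n => ((ρ (zmin + ε * (m : ℕ) + ε) : ℝ) : ℂ)) -
      Matrix.diagonal (fun m : Fin n => ((ρ (zmin + ε * (m : ℕ)) : ℝ) : ℂ)) := by
  have hnonneg : ∀ k : ℕ, k ≤ n → 0 ≤ ρ zmin - ρ (zmin + ε * k) := by
    intro k hk
    have hk' : (k : ℝ) ≤ n := Nat.cast_le.mpr hk
    have h1 : zmin + ε * k ∈ Set.Icc zmin (zmin + ε * n) := by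
      constructor
      · nlinarith [Nat.cast_nonneg (α := ℝ) k]
      · nlinarith
    linarith [hmax _ h1]
  ext i j
  simp only [Matrix.sub_apply, Matrix.mul_apply, hXp, hXm, Matrix.diagonal_apply]
  by_cases hij : i = j
  · subst hij
    simp only [if_pos rfl]
    have hsum1 : (∑ k : Fin n,
        (if (i : ℕ) = (k : ℕ) + 1 then
          ((Real.sqrt (ρ zmin - ρ (zmin + ε * (k : ℕ) + ε)) : ℝ) : ℂ) else 0) *
        (if (k : ℕ) + 1 = (i : ℕ) then
          ((Real.sqrt (ρ zmin - ρ (zmin + ε * (i : ℕ))) : ℝ) : ℂ) else 0)) =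
        if 0 < (i : ℕ) then ((ρ zmin - ρ (zmin + ε * (i : ℕ)) : ℝ) : ℂ) else 0 := by
      by_cases h0 : 0 < (i : ℕ)
      · rw [if_pos h0]
        have hlt : (i : ℕ) - 1 < n := by omega
        rw [Finset.sum_eq_single (⟨(i : ℕ) - 1, hlt⟩ : Fin n)]
        · have hc : (i : ℕ) = ((i : ℕ) - 1) + 1 := by omega
          rw [if_pos hc, if_pos hc.symm]
          have hcast : ((((i : ℕ) - 1 : ℕ) : ℝ)) = (i : ℕ) - 1 := by
            push_cast [Nat.cast_sub h0]; ring
          have harg : zmin + ε * (((i : ℕ) - 1 : ℕ) : ℝ) + ε = zmin + ε * (i : ℕ) := by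
            rw [hcast]; ring
          rw [harg]
          rw [← Complex.ofReal_mul, Real.mul_self_sqrt (hnonneg _ i.isLt.le)]
        · intro k _ hk
          by_cases hc : (i : ℕ) = (k : ℕ) + 1
          · exfalso; apply hk; ext; simp; omega
          · rw [if_neg hc, zero_mul]
        · intro h; exact absurd (Finset.mem_univ _) h
      · rw [if_neg h0]
        apply Finset.sum_eq_zero
        intro k _
        have hc : ¬ ((i : ℕ) = (k : ℕ) + 1) := by omega
        rw [if_neg hc, zero_mul]
    have hsum2 : (∑ k : Fin n,
        (if (i : ℕ) + 1 = (k : ℕ) then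
          ((Real.sqrt (ρ zmin - ρ (zmin + ε * (k : ℕ))) : ℝ) : ℂ) else 0) *
        (if (k : ℕ) = (i : ℕ) + 1 then
          ((Real.sqrt (ρ zmin - ρ (zmin + ε * (i : ℕ) + ε)) : ℝ) : ℂ) else 0)) =
        if (i : ℕ) + 1 < n then ((ρ zmin - ρ (zmin + ε * (i : ℕ) + ε) : ℝ) : ℂ) else 0 := by
      by_cases h1 : (i : ℕ) + 1 < n
      · rw [if_pos h1]
        rw [Finset.sum_eq_single (⟨(i : ℕ) + 1, h1⟩ : Fin n)]
        · rw [if_pos rfl, if_pos rfl]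
          have harg : zmin + ε * (((i : ℕ) + 1 : ℕ) : ℝ) = zmin + ε * (i : ℕ) + ε := by
            push_cast; ring
          rw [harg]
          rw [← Complex.ofReal_mul, Real.mul_self_sqrt]
          have := hnonneg ((i : ℕ) + 1) h1.le
          have harg2 : zmin + ε * (((i : ℕ) + 1 : ℕ) : ℝ) = zmin + ε * (i : ℕ) + ε := by
            push_cast; ring
          rw [harg2] at this; exact this
        · intro k _ hk
          by_cases hc : (i : ℕ) + 1 = (k : ℕ)
          · exfalso; apply hk; ext; simp; omega
          · rw [if_neg hc, zero_mul]
        · intro h; exact absurd (Finset.mem_univ _) h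
      · rw [if_neg h1]
        apply Finset.sum_eq_zero
        intro k _
        have hc : ¬ ((i : ℕ) + 1 = (k : ℕ)) := by
          intro h; exact h1 (h ▸ k.isLt)
        rw [if_neg hc, zero_mul]
    rw [hsum1, hsum2]
    by_cases h0 : 0 < (i : ℕ)
    · by_cases h1 : (i : ℕ) + 1 < n
      · rw [if_pos h0, if_pos h1]
        push_cast; ring
      · -- i = n - 1
        rw [if_pos h0, if_neg h1]
        have hin : (i : ℕ) + 1 = n := by omega
        have hcn : (n : ℝ) = ((i : ℕ) : ℝ) + 1 := by exact_mod_cast hin.symm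
        have harg : zmin + ε * (i : ℕ) + ε = zmin + ε * n := by rw [hcn]; ring
        rw [harg, ← hends]
        push_cast; ring
    · by_cases h1 : (i : ℕ) + 1 < n
      · rw [if_neg h0, if_pos h1]
        have hi0 : (i : ℕ) = 0 := by omega
        rw [hi0]
        norm_num
      · -- n = 1, i = 0
        rw [if_neg h0, if_neg h1]
        have hi0 : (i : ℕ) = 0 := by omega
        have hn1 : n = 1 := by omega
        have harg : zmin + ε * (i : ℕ) + ε = zmin + ε * n := by
          rw [hi0, hn1]; norm_num
        have harg2 : zmin + ε * (i : ℕ) = zmin := by rw [hi0]; ring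
        rw [harg, harg2, ← hends]
        ring
  · rw [if_neg hij]
    have hij' : (i : ℕ) ≠ (j : ℕ) := fun h => hij (Fin.ext h)
    have h1 : (∑ k : Fin n,
        (if (i : ℕ) = (k : ℕ) + 1 then
          ((Real.sqrt (ρ zmin - ρ (zmin + ε * (k : ℕ) + ε)) : ℝ) : ℂ) else 0) *
        (if (k : ℕ) + 1 = (j : ℕ) then
          ((Real.sqrt (ρ zmin - ρ (zmin + ε * (j : ℕ))) : ℝ) : ℂ) else 0)) = 0 := by
      apply Finset.sum_eq_zero
      intro k _
      by_cases hc : (i : ℕ) = (k : ℕ) + 1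
      · have hc2 : ¬ ((k : ℕ) + 1 = (j : ℕ)) := by omega
        rw [if_neg hc2, mul_zero]
      · rw [if_neg hc, zero_mul]
    have h2 : (∑ k : Fin n,
        (if (i : ℕ) + 1 = (k : ℕ) then
          ((Real.sqrt (ρ zmin - ρ (zmin + ε * (k : ℕ))) : ℝ) : ℂ) else 0) *
        (if (k : ℕ) = (j : ℕ) + 1 then
          ((Real.sqrt (ρ zmin - ρ (zmin + ε * (j : ℕ) + ε)) : ℝ) : ℂ) else 0)) = 0 := by
      apply Finset.sum_eq_zero
      intro k _
      by_cases hc : (i : ℕ) + 1 = (k : ℕ)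
      · have hc2 : ¬ ((k : ℕ) = (j : ℕ) + 1) := by omega
        rw [if_neg hc2, mul_zero]
      · rw [if_neg hc, zero_mul]
    rw [h1, h2]
    simp [hij]
end

section
/- With ω as above (τ(ω(x)) + τ(ω(x)+x) = 0, τ strictly decreasing with τ(x)² = ρ(x) - D), for all x ≥ 0 and 0 ≤ m ≤ x/ε: ω(ε) satisfies the interleaving inequalities ω(x + ε) ≤ ω(x) and ω(x+ε) + (x+ε) ≥ ω(x) + x; that is, the intervals J_x = [ω(x), ω(x) + x] are nested increasing in x. -/
/-!
Since `τ (ω x) = -τ (ω x + x)` and `τ` is strictly decreasing, the two endpoints of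
`J_x = [ω x, ω x + x]` move in opposite directions as `x` varies: if the left endpoint moved
right, the right endpoint would move left, and `J_x` would shrink while its length `x` grows.
-/

theorem StrictAnti.lt_of_add_eq_add {α β : Type*} [LinearOrder α] [AddCommMonoid β]
    [PartialOrder β] [IsOrderedCancelAddMonoid β] {τ : α → β} (hτ : StrictAnti τ)
    {a b a' b' : α} (hsum : τ a + τ b = τ a' + τ b') (ha : a < a') : b' < b := by
  refine hτ.lt_iff_gt.mp (lt_of_add_lt_add_left (a := τ a') ?_)
  calc τ a' + τ b < τ a + τ b := add_lt_add_left (hτ ha) _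
    _ = τ a' + τ b' := hsum

section
variable {α β : Type*} [AddCommGroup α] [LinearOrder α] [IsOrderedAddMonoid α]
  [AddCommMonoid β] [PartialOrder β] [IsOrderedCancelAddMonoid β]
  {τ : α → β} {ω : α → α} {c : β}

theorem antitone_of_strictAnti_add_eq (hτ : StrictAnti τ)
    (hω : ∀ x, τ (ω x) + τ (ω x + x) = c) : Antitone ω := by
  intro x y hxy
  by_contra! hlt
  have hright : ω y + y < ω x + x := hτ.lt_of_add_eq_add ((hω x).trans (hω y).symm) hlt
  exact hright.not_gt (add_lt_add_of_lt_of_le hlt hxy)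

theorem monotone_add_of_strictAnti_add_eq (hτ : StrictAnti τ)
    (hω : ∀ x, τ (ω x) + τ (ω x + x) = c) : Monotone fun x ↦ ω x + x := by
  intro x y hxy
  by_contra! hlt
  have hleft : ω x < ω y :=
    hτ.lt_of_add_eq_add (by rw [add_comm, hω y, ← hω x, add_comm]) hlt
  exact hleft.not_ge (antitone_of_strictAnti_add_eq hτ hω hxy)

end

theorem stmt_15_general (τ ω : ℝ → ℝ) (ε : ℝ)
    (hε : 0 < ε)
    (hτanti : StrictAnti τ)
    (hω : ∀ x, τ (ω x) + τ (ω x + x) = 0) :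
    (∀ x : ℝ, 0 ≤ x → ω (x + ε) ≤ ω x ∧ ω x + x ≤ ω (x + ε) + (x + ε)) ∧
    ∀ x y : ℝ, 0 ≤ x → x ≤ y →
      Set.Icc (ω x) (ω x + x) ⊆ Set.Icc (ω y) (ω y + y) := by
  have hanti := antitone_of_strictAnti_add_eq hτanti hω
  have hmono := monotone_add_of_strictAnti_add_eq hτanti hω
  refine ⟨fun x _ ↦ ?_, fun x y _ hxy ↦ Set.Icc_subset_Icc (hanti hxy) (hmono hxy)⟩
  have hxε : x ≤ x + ε := le_add_of_nonneg_right hε.le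
  exact ⟨hanti hxε, hmono hxε⟩

theorem stmt_15 (ρ τ ω : ℝ → ℝ) (z₀ D ε : ℝ)
    (hε : 0 < ε) (hcont : Continuous ρ)
    (hdec : StrictAntiOn ρ (Set.Iic z₀))
    (hinc : StrictMonoOn ρ (Set.Ici z₀))
    (hD : D = ρ z₀)
    (hτanti : StrictAnti τ)
    (hτsq : ∀ x, (τ x) ^ 2 = ρ x - D)
    (hτpos : ∀ x < z₀, 0 < τ x)
    (hω : ∀ x, τ (ω x) + τ (ω x + x) = 0) :
    (∀ x : ℝ, 0 ≤ x → ω (x + ε) ≤ ω x ∧ ω x + x ≤ ω (x + ε) + (x + ε)) ∧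
    ∀ x y : ℝ, 0 ≤ x → x ≤ y →
      Set.Icc (ω x) (ω x + x) ⊆ Set.Icc (ω y) (ω y + y) :=
  stmt_15_general τ ω ε hε hτanti hω
end
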